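/- arXiv:2602.19681 — 4 statements merged into one kernel-verified Lean document; each statement's English description precedes it below -/
import Mathlib

section
/- Let p ≥ 2 and n ≥ 1 be integers, and let A_1, …, A_p be symmetric real n×n matrices. Set S_{αβ} = tr(A_α A_β), S_α = S_{αα} = ‖A_α‖², and S = S_1 + … + S_p. Then Σ_{α,β=1}^p ‖A_α A_β − A_β A_α‖² + Σ_{α,β=1}^p S_{αβ}² ≤ (3/2)·S². -/
/-!
Rotating the family by an orthogonal matrix, `A' γ = ∑ α, V α γ • A α`, changes none of the three
sums, and diagonalizing the Gram matrix `S` makes the `A' γ` pairwise orthogonal for the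
Frobenius inner product; so we may assume `S` diagonal.

For symmetric `A` with eigenvalues `μ` and an orthogonal family of symmetric `B i` with
`‖B i‖² ≤ c`, in an eigenbasis of `A` one has `∑ i, ‖[A, B i]‖² = ∑ s t, w s t * (μ s - μ t)²`
with `w s t = ∑ i, (B i s t)²`. Bessel's inequality against `E_st + E_ts` gives `2 * w s t ≤ c`
off the diagonal, and the Anderson–Morley bound for the weighted Laplacian `w` then gives
`∑ i, ‖[A, B i]‖² ≤ ‖A‖² (∑ i, ‖B i‖² + c)`.

Let `x = S a` be the largest `S α` and `R = S - x`. Comparing each `A γ` with the others, with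
`c = x` for `γ ≠ a` and `c = R` for `γ = a`, bounds the left-hand side by `x² + 4 x R + R²`,
and `4 x R ≤ (x + R)²`.
-/

open Matrix
open LinearMap (BilinForm)
open scoped Kronecker

section Rotation

variable {R M N ι : Type*} [CommRing R] [AddCommGroup M] [Module R M] [AddCommGroup N]
  [Module R N] [Fintype ι]

def rotateFamily (V : Matrix ι ι R) (x : ι → M) (γ : ι) : M := ∑ α, V α γ • x α

theorem sum_bilin_rotateFamily [DecidableEq ι] (b : BilinForm R M) {V : Matrix ι ι R}
    (hV : V * Vᵀ = 1) (x : ι → M) :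
    ∑ γ, b (rotateFamily V x γ) (rotateFamily V x γ) = ∑ α, b (x α) (x α) := by
  have hV' : ∀ α β, ∑ γ, V α γ * V β γ = if α = β then 1 else 0 := fun α β => by
    simpa [mul_apply, one_apply] using congrFun (congrFun hV α) β
  simp only [rotateFamily, map_sum, map_smul, LinearMap.sum_apply, LinearMap.smul_apply,
    smul_eq_mul, Finset.mul_sum]
  calc ∑ γ, ∑ β, ∑ α, V β γ * (V α γ * b (x α) (x β))
      = ∑ β, ∑ α, (∑ γ, V α γ * V β γ) * b (x α) (x β) := by
        rw [Finset.sum_comm]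
        refine Finset.sum_congr rfl fun β _ => ?_
        rw [Finset.sum_comm]
        simp only [Finset.sum_mul]
        exact Finset.sum_congr rfl fun α _ => Finset.sum_congr rfl fun γ _ => by ring
    _ = ∑ α, b (x α) (x α) := by simp [hV']

theorem bilin_rotateFamily (K : M →ₗ[R] M →ₗ[R] N) (V : Matrix ι ι R) (x : ι → M) (γ δ : ι) :
    K (rotateFamily V x γ) (rotateFamily V x δ)
      = rotateFamily (V ⊗ₖ V) (fun q => K (x q.1) (x q.2)) (γ, δ) := by
  simp only [rotateFamily, map_sum, map_smul, LinearMap.sum_apply, LinearMap.smul_apply,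
    kroneckerMap_apply, Fintype.sum_prod_type, Finset.smul_sum, smul_smul]
  rw [Finset.sum_comm]
  exact Finset.sum_congr rfl fun α _ => Finset.sum_congr rfl fun β _ => by rw [mul_comm]

theorem kronecker_mul_transpose_self [DecidableEq ι] {V : Matrix ι ι R} (hV : V * Vᵀ = 1) :
    (V ⊗ₖ V) * (V ⊗ₖ V)ᵀ = 1 := by
  rw [← kroneckerMap_transpose, ← mul_kronecker_mul, hV, one_kronecker_one]

theorem sum_sum_bilin_rotateFamily [DecidableEq ι] (K : M →ₗ[R] M →ₗ[R] N) (b : BilinForm R N)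
    {V : Matrix ι ι R} (hV : V * Vᵀ = 1) (x : ι → M) :
    ∑ γ, ∑ δ, b (K (rotateFamily V x γ) (rotateFamily V x δ))
        (K (rotateFamily V x γ) (rotateFamily V x δ))
      = ∑ α, ∑ β, b (K (x α) (x β)) (K (x α) (x β)) := by
  simp only [bilin_rotateFamily K V x]
  simpa only [Fintype.sum_prod_type] using
    sum_bilin_rotateFamily b (kronecker_mul_transpose_self hV) (fun q => K (x q.1) (x q.2))

end Rotation

theorem sum_sq_bilin_le_of_orthogonal {M ι : Type*} [AddCommGroup M] [Module ℝ M]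
    (b : BilinForm ℝ M) (hb : b.IsSymm) (hb0 : ∀ x, 0 ≤ b x x)
    {s : Finset ι} {x : ι → M} (horth : ∀ i ∈ s, ∀ j ∈ s, i ≠ j → b (x i) (x j) = 0)
    {c : ℝ} (hc0 : 0 ≤ c) (hc : ∀ i ∈ s, b (x i) (x i) ≤ c) (e : M) :
    ∑ i ∈ s, b (x i) e ^ 2 ≤ c * b e e := by
  set T := ∑ i ∈ s, b (x i) e ^ 2
  set y := ∑ i ∈ s, b (x i) e • x i
  have hT0 : 0 ≤ T := Finset.sum_nonneg fun _ _ => sq_nonneg _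
  have hye : b y e = T := by
    simp only [y, T, map_sum, map_smul, LinearMap.sum_apply, LinearMap.smul_apply, smul_eq_mul, sq]
  have hey : b e y = T := (hb.eq e y).trans hye
  have hyy : b y y ≤ c * T := by
    have hdiag : b y y = ∑ i ∈ s, b (x i) e ^ 2 * b (x i) (x i) := by
      simp only [y, map_sum, map_smul, LinearMap.sum_apply, LinearMap.smul_apply, smul_eq_mul]
      refine Finset.sum_congr rfl fun i hi => ?_
      rw [Finset.sum_eq_single_of_mem i hi fun j hj hji => by rw [horth j hj i hi hji]; ring]
      ring
    rw [hdiag, Finset.mul_sum]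
    exact Finset.sum_le_sum fun i hi => by
      rw [mul_comm c]; exact mul_le_mul_of_nonneg_left (hc i hi) (sq_nonneg _)
  -- `t ↦ b (e - t • y) (e - t • y)` is a nonnegative quadratic, so its discriminant is `≤ 0`.
  have hquad : ∀ t : ℝ, 0 ≤ (c * T) * (t * t) + (-2 * T) * t + b e e := by
    intro t
    have h := hb0 (e - t • y)
    simp only [map_sub, map_smul, LinearMap.sub_apply, LinearMap.smul_apply, smul_eq_mul,
      hey, hye] at h
    nlinarith [mul_le_mul_of_nonneg_left hyy (mul_self_nonneg t)]
  have hdisc := discrim_le_zero hquad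
  unfold discrim at hdisc
  by_contra! hlt
  nlinarith [mul_nonneg hc0 (hb0 e)]

theorem sq_sub_le_mul_add_div {a b : ℝ} (ha : 0 < a) (hb : 0 < b) (x y : ℝ) :
    (x - y) ^ 2 ≤ (a + b) * (x ^ 2 / a + y ^ 2 / b) := by
  have key : (a + b) * (x ^ 2 / a + y ^ 2 / b) - (x - y) ^ 2 = (b * x + a * y) ^ 2 / (a * b) := by
    field_simp
    ring
  linarith [div_nonneg (sq_nonneg (b * x + a * y)) (mul_pos ha hb).le]

section WeightedGraph

variable {κ : Type*} [Fintype κ] [DecidableEq κ] {w : κ → κ → ℝ}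

-- Rows `s`, `t` and columns `s`, `t` of `w` overlap only in the entries `(s, t)`, `(t, s)`.
theorem two_mul_sum_add_sum_le (hw0 : ∀ u v, 0 ≤ w u v) (hsymm : ∀ u v, w u v = w v u)
    (hdiag : ∀ u, w u u = 0) {s t : κ} (hst : s ≠ t) :
    2 * (∑ v, w s v + ∑ v, w t v) ≤ ∑ u, ∑ v, w u v + 2 * w s t := by
  have hcol : ∀ u, w u s + w u t ≤ ∑ v, w u v := fun u => by
    rw [← Finset.sum_pair hst]
    exact Finset.sum_le_sum_of_subset_of_nonneg (Finset.subset_univ _) fun v _ _ => hw0 u v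
  have hpair := Finset.sum_pair (f := fun u => w u s + w u t) hst
  have hcols : ∑ u, (w u s + w u t) = ∑ v, w s v + ∑ v, w t v := by
    simp only [Finset.sum_add_distrib, hsymm _ s, hsymm _ t]
  have hrest : ∑ u ∈ {s, t}ᶜ, (w u s + w u t) ≤ ∑ u ∈ {s, t}ᶜ, ∑ v, w u v :=
    Finset.sum_le_sum fun u _ => hcol u
  have hsplit := Finset.sum_add_sum_compl {s, t} fun u => ∑ v, w u v
  have hsplit' := Finset.sum_add_sum_compl {s, t} fun u => w u s + w u t
  rw [Finset.sum_pair hst] at hsplit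
  simp only [hpair, hdiag, hsymm t s] at hsplit'
  linarith

-- The Anderson–Morley bound `λ_max ≤ max_{s ≠ t} (D s + D t)` for the weighted Laplacian, with
-- `D s = ∑ t, w s t`, obtained from `(μ s - μ t)² ≤ (D s + D t) (μ s² / D s + μ t² / D t)`.
theorem sum_mul_sq_sub_le (hw0 : ∀ u v, 0 ≤ w u v) (hsymm : ∀ u v, w u v = w v u)
    (hdiag : ∀ u, w u u = 0) {c : ℝ} (hc0 : 0 ≤ c) (hc : ∀ u v, u ≠ v → 2 * w u v ≤ c) (μ : κ → ℝ) :
    ∑ s, ∑ t, w s t * (μ s - μ t) ^ 2 ≤ (∑ s, ∑ t, w s t + c) * ∑ s, μ s ^ 2 := by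
  set D : κ → ℝ := fun s => ∑ t, w s t
  set m := ∑ s, ∑ t, w s t
  have hD : ∀ s t, w s t ≤ D s := fun s t =>
    Finset.single_le_sum (f := w s) (fun v _ => hw0 s v) (Finset.mem_univ t)
  have hpoint : ∀ s t,
      w s t * (μ s - μ t) ^ 2
        ≤ (m + c) / 2 * (w s t * (μ s ^ 2 / D s) + w s t * (μ t ^ 2 / D t)) := by
    intro s t
    rcases (hw0 s t).eq_or_lt with hzero | hpos
    · simp [← hzero]
    have hst : s ≠ t := fun h => by simp [h, hdiag] at hpos
    have hDs : 0 < D s := hpos.trans_le (hD s t)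
    have hDt : 0 < D t := hpos.trans_le (hsymm s t ▸ hD t s)
    have hedge : D s + D t ≤ (m + c) / 2 := by
      linarith [two_mul_sum_add_sum_le hw0 hsymm hdiag hst, hc s t hst]
    calc w s t * (μ s - μ t) ^ 2
        ≤ w s t * ((D s + D t) * (μ s ^ 2 / D s + μ t ^ 2 / D t)) :=
          mul_le_mul_of_nonneg_left (sq_sub_le_mul_add_div hDs hDt _ _) hpos.le
      _ ≤ w s t * ((m + c) / 2 * (μ s ^ 2 / D s + μ t ^ 2 / D t)) := by
          gcongr
      _ = _ := by ring
  have hrow : ∀ s, ∑ t, w s t * (μ s ^ 2 / D s) ≤ μ s ^ 2 := fun s => by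
    rw [← Finset.sum_mul]
    rcases (show 0 ≤ D s from Finset.sum_nonneg fun t _ => hw0 s t).eq_or_lt with h | h
    · rw [← h]; simp [sq_nonneg]
    · exact (mul_div_cancel₀ _ h.ne').le
  have hcol : ∑ s, ∑ t, w s t * (μ t ^ 2 / D t) = ∑ s, ∑ t, w s t * (μ s ^ 2 / D s) := by
    rw [Finset.sum_comm]
    exact Finset.sum_congr rfl fun s _ => Finset.sum_congr rfl fun t _ => by rw [hsymm]
  calc ∑ s, ∑ t, w s t * (μ s - μ t) ^ 2
      ≤ ∑ s, ∑ t, (m + c) / 2 * (w s t * (μ s ^ 2 / D s) + w s t * (μ t ^ 2 / D t)) :=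
        Finset.sum_le_sum fun s _ => Finset.sum_le_sum fun t _ => hpoint s t
    _ = (m + c) * ∑ s, ∑ t, w s t * (μ s ^ 2 / D s) := by
        simp only [← Finset.mul_sum, Finset.sum_add_distrib, hcol]
        ring
    _ ≤ (m + c) * ∑ s, μ s ^ 2 := by
        gcongr with s
        · exact add_nonneg (Finset.sum_nonneg fun s _ => Finset.sum_nonneg fun t _ => hw0 s t) hc0
        · exact hrow s

end WeightedGraph

namespace Matrix

variable {m n : Type*} [Fintype m] [Fintype n]

theorem exists_orthogonal_diagonalization [DecidableEq m] {A : Matrix m m ℝ} (hA : A.IsSymm) :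
    ∃ (Q : Matrix m m ℝ) (μ : m → ℝ), Qᵀ * Q = 1 ∧ Q * Qᵀ = 1 ∧ A = Q * diagonal μ * Qᵀ := by
  have hH : A.IsHermitian := by
    rwa [IsHermitian, conjTranspose_eq_transpose_of_trivial]
  have hU := hH.eigenvectorUnitary.2
  refine ⟨hH.eigenvectorUnitary, hH.eigenvalues, ?_, ?_, ?_⟩
  · simpa [star_eq_conjTranspose] using (mem_unitaryGroup_iff').mp hU
  · simpa [star_eq_conjTranspose] using (mem_unitaryGroup_iff).mp hU
  · conv_lhs => rw [hH.spectral_theorem]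
    simp [Unitary.conjStarAlgAut_apply, star_eq_conjTranspose]

def frobeniusInner : BilinForm ℝ (Matrix m n ℝ) :=
  LinearMap.mk₂ ℝ (fun X Y => ∑ i, ∑ j, X i j * Y i j)
    (fun X X' Y => by simp only [add_apply, add_mul, Finset.sum_add_distrib])
    (fun c X Y => by simp only [smul_apply, smul_eq_mul, mul_assoc, Finset.mul_sum])
    (fun X Y Y' => by simp only [add_apply, mul_add, Finset.sum_add_distrib])
    (fun c X Y => by simp only [smul_apply, smul_eq_mul, mul_left_comm, Finset.mul_sum])

theorem frobeniusInner_apply (X Y : Matrix m n ℝ) :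
    frobeniusInner X Y = ∑ i, ∑ j, X i j * Y i j := rfl

theorem frobeniusInner_self (X : Matrix m n ℝ) : frobeniusInner X X = ∑ i, ∑ j, X i j ^ 2 := by
  simp only [frobeniusInner_apply, sq]

theorem frobeniusInner_comm (X Y : Matrix m n ℝ) : frobeniusInner X Y = frobeniusInner Y X := by
  simp only [frobeniusInner_apply, mul_comm]

theorem frobeniusInner_self_nonneg (X : Matrix m n ℝ) : 0 ≤ frobeniusInner X X :=
  Finset.sum_nonneg fun _ _ => Finset.sum_nonneg fun _ _ => mul_self_nonneg _

theorem frobeniusInner_eq_trace (X Y : Matrix m n ℝ) : frobeniusInner X Y = trace (X * Yᵀ) := by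
  simp only [frobeniusInner_apply, trace, diag_apply, mul_apply, transpose_apply]

theorem trace_mul_eq_frobeniusInner {X Y : Matrix m m ℝ} (hY : Y.IsSymm) :
    trace (X * Y) = frobeniusInner X Y := by
  rw [frobeniusInner_eq_trace, hY.eq]

theorem frobeniusInner_conj [DecidableEq m] {Q : Matrix m m ℝ} (hQ : Qᵀ * Q = 1)
    (X Y : Matrix m m ℝ) :
    frobeniusInner (Q * X * Qᵀ) (Q * Y * Qᵀ) = frobeniusInner X Y := by
  have hQX : Q * X * Qᵀ * (Q * Y * Qᵀ)ᵀ = Q * (X * Yᵀ) * Qᵀ := by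
    simp only [transpose_mul, transpose_transpose, Matrix.mul_assoc, ← Matrix.mul_assoc Qᵀ Q,
      hQ, Matrix.one_mul]
  rw [frobeniusInner_eq_trace, frobeniusInner_eq_trace, hQX, trace_mul_cycle, hQ, Matrix.one_mul]

theorem frobeniusInner_diagonal [DecidableEq m] (μ : m → ℝ) :
    frobeniusInner (diagonal μ) (diagonal μ) = ∑ s, μ s ^ 2 := by
  simp [frobeniusInner_apply, diagonal_apply, sq]

theorem frobeniusInner_diagonal_commutator [DecidableEq m] (μ : m → ℝ) (B : Matrix m m ℝ) :
    frobeniusInner (diagonal μ * B - B * diagonal μ) (diagonal μ * B - B * diagonal μ)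
      = ∑ s, ∑ t, (μ s - μ t) ^ 2 * B s t ^ 2 := by
  simp only [frobeniusInner_apply, sub_apply, diagonal_mul, mul_diagonal]
  exact Finset.sum_congr rfl fun s _ => Finset.sum_congr rfl fun t _ => by ring

theorem frobeniusInner_isSymm : (frobeniusInner : BilinForm ℝ (Matrix m n ℝ)).IsSymm :=
  ⟨frobeniusInner_comm⟩

theorem frobeniusInner_single_add_single [DecidableEq m] (X : Matrix m m ℝ) (u v : m) :
    frobeniusInner X (single u v 1 + single v u 1) = X u v + X v u := by
  simp [frobeniusInner_apply, single_apply, mul_add, Finset.sum_add_distrib, ite_and]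

theorem two_mul_sum_sq_apply_le {ι : Type*} [DecidableEq m] {s : Finset ι}
    {B : ι → Matrix m m ℝ} (hB : ∀ i ∈ s, (B i).IsSymm)
    (horth : ∀ i ∈ s, ∀ j ∈ s, i ≠ j → frobeniusInner (B i) (B j) = 0)
    {c : ℝ} (hc0 : 0 ≤ c) (hc : ∀ i ∈ s, frobeniusInner (B i) (B i) ≤ c) {u v : m} (huv : u ≠ v) :
    2 * ∑ i ∈ s, B i u v ^ 2 ≤ c := by
  set E : Matrix m m ℝ := single u v 1 + single v u 1 with hE
  have hBE : ∀ i ∈ s, frobeniusInner (B i) E = 2 * B i u v := fun i hi => by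
    rw [hE, frobeniusInner_single_add_single, (hB i hi).apply u v, two_mul]
  have hEE : frobeniusInner E E = 2 := by
    rw [hE, frobeniusInner_single_add_single]
    simp [huv, huv.symm, one_add_one_eq_two]
  have h := sum_sq_bilin_le_of_orthogonal frobeniusInner frobeniusInner_isSymm
    frobeniusInner_self_nonneg horth hc0 hc E
  rw [Finset.sum_congr rfl fun i hi => by rw [hBE i hi], hEE] at h
  simp only [mul_pow, ← Finset.mul_sum] at h
  linarith

theorem frobeniusInner_commutator_conj [DecidableEq m] {Q : Matrix m m ℝ} (hQ : Qᵀ * Q = 1)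
    (X Y : Matrix m m ℝ) :
    frobeniusInner (Q * X * Qᵀ * (Q * Y * Qᵀ) - Q * Y * Qᵀ * (Q * X * Qᵀ))
        (Q * X * Qᵀ * (Q * Y * Qᵀ) - Q * Y * Qᵀ * (Q * X * Qᵀ))
      = frobeniusInner (X * Y - Y * X) (X * Y - Y * X) := by
  have hconj : ∀ X Y : Matrix m m ℝ, Q * X * Qᵀ * (Q * Y * Qᵀ) = Q * (X * Y) * Qᵀ := fun X Y => by
    simp only [Matrix.mul_assoc, ← Matrix.mul_assoc Qᵀ Q, hQ, Matrix.one_mul]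
  rw [hconj, hconj, ← sub_mul, ← mul_sub, frobeniusInner_conj hQ]

theorem sum_frobeniusInner_diagonal_commutator_le [DecidableEq m] {ι : Type*} {s : Finset ι}
    {B : ι → Matrix m m ℝ} (hB : ∀ i ∈ s, (B i).IsSymm)
    (horth : ∀ i ∈ s, ∀ j ∈ s, i ≠ j → frobeniusInner (B i) (B j) = 0)
    {c : ℝ} (hc0 : 0 ≤ c) (hc : ∀ i ∈ s, frobeniusInner (B i) (B i) ≤ c) (μ : m → ℝ) :
    ∑ i ∈ s, frobeniusInner (diagonal μ * B i - B i * diagonal μ)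
        (diagonal μ * B i - B i * diagonal μ)
      ≤ frobeniusInner (diagonal μ) (diagonal μ) * (∑ i ∈ s, frobeniusInner (B i) (B i) + c) := by
  set W : m → m → ℝ := fun u v => if u = v then 0 else ∑ i ∈ s, B i u v ^ 2
  have hW0 : ∀ u v, 0 ≤ W u v := fun u v => by
    simp only [W]; split_ifs
    exacts [le_rfl, Finset.sum_nonneg fun i _ => sq_nonneg _]
  have hWsymm : ∀ u v, W u v = W v u := fun u v => by
    simp only [W, eq_comm (a := u)]
    split_ifs
    · rfl
    · exact Finset.sum_congr rfl fun i hi => by rw [(hB i hi).apply u v]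
  have hWdiag : ∀ u, W u u = 0 := fun u => if_pos rfl
  have hWc : ∀ u v, u ≠ v → 2 * W u v ≤ c := fun u v huv => by
    simpa only [W, if_neg huv] using two_mul_sum_sq_apply_le hB horth hc0 hc huv
  have hLHS : ∑ i ∈ s, frobeniusInner (diagonal μ * B i - B i * diagonal μ)
        (diagonal μ * B i - B i * diagonal μ) = ∑ u, ∑ v, W u v * (μ u - μ v) ^ 2 := by
    simp only [frobeniusInner_diagonal_commutator]
    rw [Finset.sum_comm]
    refine Finset.sum_congr rfl fun u _ => ?_
    rw [Finset.sum_comm]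
    refine Finset.sum_congr rfl fun v _ => ?_
    by_cases huv : u = v
    · simp [huv]
    · simp only [W, if_neg huv, Finset.mul_sum, mul_comm]
  have hWsum : ∑ u, ∑ v, W u v ≤ ∑ i ∈ s, frobeniusInner (B i) (B i) := by
    calc ∑ u, ∑ v, W u v ≤ ∑ u, ∑ v, ∑ i ∈ s, B i u v ^ 2 :=
          Finset.sum_le_sum fun u _ => Finset.sum_le_sum fun v _ => by
            simp only [W]; split_ifs
            exacts [Finset.sum_nonneg fun i _ => sq_nonneg _, le_rfl]
      _ = ∑ i ∈ s, frobeniusInner (B i) (B i) := by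
          simp only [frobeniusInner_apply, sq]
          rw [Finset.sum_congr rfl fun u _ => Finset.sum_comm]
          exact Finset.sum_comm
  rw [hLHS, frobeniusInner_diagonal, mul_comm]
  calc ∑ u, ∑ v, W u v * (μ u - μ v) ^ 2 ≤ (∑ u, ∑ v, W u v + c) * ∑ u, μ u ^ 2 :=
        sum_mul_sq_sub_le hW0 hWsymm hWdiag hc0 hWc μ
    _ ≤ _ := by gcongr

theorem sum_frobeniusInner_commutator_le [DecidableEq m] {A : Matrix m m ℝ} (hA : A.IsSymm)
    {ι : Type*} {s : Finset ι} {B : ι → Matrix m m ℝ} (hB : ∀ i ∈ s, (B i).IsSymm)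
    (horth : ∀ i ∈ s, ∀ j ∈ s, i ≠ j → frobeniusInner (B i) (B j) = 0)
    {c : ℝ} (hc0 : 0 ≤ c) (hc : ∀ i ∈ s, frobeniusInner (B i) (B i) ≤ c) :
    ∑ i ∈ s, frobeniusInner (A * B i - B i * A) (A * B i - B i * A)
      ≤ frobeniusInner A A * (∑ i ∈ s, frobeniusInner (B i) (B i) + c) := by
  obtain ⟨Q, μ, hQ, hQ', rfl⟩ := exists_orthogonal_diagonalization hA
  set B' : ι → Matrix m m ℝ := fun i => Qᵀ * B i * Qᵀᵀ
  have hQt : Qᵀᵀ * Qᵀ = 1 := by rw [transpose_transpose, hQ']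
  have hB' : ∀ i, B i = Q * B' i * Qᵀ := fun i => by
    simp only [B', transpose_transpose, ← Matrix.mul_assoc, hQ', Matrix.one_mul]
    simp only [Matrix.mul_assoc, hQ', Matrix.mul_one]
  have hB'B' : ∀ i j, frobeniusInner (B' i) (B' j) = frobeniusInner (B i) (B j) :=
    fun i j => frobeniusInner_conj hQt _ _
  have hB'symm : ∀ i ∈ s, (B' i).IsSymm := fun i hi => by
    simp only [B', IsSymm, transpose_mul, transpose_transpose, (hB i hi).eq, Matrix.mul_assoc]
  calc ∑ i ∈ s, frobeniusInner (Q * diagonal μ * Qᵀ * B i - B i * (Q * diagonal μ * Qᵀ))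
        (Q * diagonal μ * Qᵀ * B i - B i * (Q * diagonal μ * Qᵀ))
      = ∑ i ∈ s, frobeniusInner (diagonal μ * B' i - B' i * diagonal μ)
          (diagonal μ * B' i - B' i * diagonal μ) :=
        Finset.sum_congr rfl fun i _ => by rw [hB' i, frobeniusInner_commutator_conj hQ]
    _ ≤ frobeniusInner (diagonal μ) (diagonal μ) * (∑ i ∈ s, frobeniusInner (B' i) (B' i) + c) :=
        sum_frobeniusInner_diagonal_commutator_le hB'symm
          (fun i hi j hj hij => (hB'B' i j).trans (horth i hi j hj hij))
          hc0 (fun i hi => (hB'B' i i).trans_le (hc i hi)) μ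
    _ = _ := by simp only [hB'B', frobeniusInner_conj hQ]

theorem li_li_of_orthogonal {ι : Type*} [Fintype ι] [DecidableEq m] {A : ι → Matrix m m ℝ}
    (hA : ∀ α, (A α).IsSymm) (horth : ∀ α β, α ≠ β → frobeniusInner (A α) (A β) = 0) :
    ∑ α, ∑ β, frobeniusInner (A α * A β - A β * A α) (A α * A β - A β * A α)
        + ∑ α, ∑ β, frobeniusInner (A α) (A β) ^ 2
      ≤ 3 / 2 * (∑ α, frobeniusInner (A α) (A α)) ^ 2 := by
  classical
  set l : ι → ℝ := fun α => frobeniusInner (A α) (A α)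
  rcases isEmpty_or_nonempty ι with hι | hι
  · simp
  obtain ⟨a, ha⟩ := Finite.exists_max l
  have hl0 : ∀ α, 0 ≤ l α := fun α => frobeniusInner_self_nonneg _
  set row : ι → ℝ := fun γ => ∑ δ, frobeniusInner (A γ * A δ - A δ * A γ) (A γ * A δ - A δ * A γ)
  have hrow : ∀ γ {c}, 0 ≤ c → (∀ δ ∈ Finset.univ.erase γ, l δ ≤ c) →
      row γ ≤ l γ * (∑ δ ∈ Finset.univ.erase γ, l δ + c) := fun γ c hc0 hc => by
    simp only [row, ← Finset.add_sum_erase _ _ (Finset.mem_univ γ), sub_self, map_zero, zero_add]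
    exact sum_frobeniusInner_commutator_le (hA γ) (fun δ _ => hA δ)
      (fun i _ j _ hij => horth i j hij) hc0 hc
  have hgram : ∀ α, ∑ β, frobeniusInner (A α) (A β) ^ 2 = l α ^ 2 := fun α =>
    Finset.sum_eq_single_of_mem α (Finset.mem_univ α) fun β _ hβ => by simp [horth α β (Ne.symm hβ)]
  set x := l a
  set R := ∑ γ ∈ Finset.univ.erase a, l γ
  have hS : ∑ γ, l γ = x + R := (Finset.add_sum_erase _ _ (Finset.mem_univ a)).symm
  have hR0 : 0 ≤ R := Finset.sum_nonneg fun γ _ => hl0 γ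
  have hrow_a : row a ≤ x * (R + R) :=
    hrow a hR0 fun δ hδ => Finset.single_le_sum (fun γ _ => hl0 γ) hδ
  have hrow_ne : ∀ γ ∈ Finset.univ.erase a, row γ + l γ ^ 2 ≤ l γ * (x + R + x) := fun γ hγ => by
    have h := hrow γ (hl0 a) fun δ _ => ha δ
    rw [Finset.sum_erase_eq_sub (Finset.mem_univ γ), hS] at h
    nlinarith
  calc ∑ γ, row γ + ∑ α, ∑ β, frobeniusInner (A α) (A β) ^ 2
      = ∑ γ, (row γ + l γ ^ 2) := by simp only [hgram, Finset.sum_add_distrib]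
    _ = (row a + x ^ 2) + ∑ γ ∈ Finset.univ.erase a, (row γ + l γ ^ 2) :=
        (Finset.add_sum_erase _ _ (Finset.mem_univ a)).symm
    _ ≤ (x * (R + R) + x ^ 2) + ∑ γ ∈ Finset.univ.erase a, l γ * (x + R + x) :=
        add_le_add (by linarith) (Finset.sum_le_sum hrow_ne)
    _ = (x * (R + R) + x ^ 2) + R * (x + R + x) := by rw [← Finset.sum_mul]
    _ ≤ 3 / 2 * (∑ γ, l γ) ^ 2 := by
        rw [hS]
        nlinarith [sq_nonneg (x - R)]

end Matrix

theorem exists_rotateFamily_orthogonal {M ι : Type*} [AddCommGroup M] [Module ℝ M] [Fintype ι]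
    [DecidableEq ι] (b : BilinForm ℝ M) (hb : b.IsSymm) (x : ι → M) :
    ∃ V : Matrix ι ι ℝ, V * Vᵀ = 1 ∧
      ∀ γ δ, γ ≠ δ → b (rotateFamily V x γ) (rotateFamily V x δ) = 0 := by
  set G : Matrix ι ι ℝ := Matrix.of fun α β => b (x α) (x β)
  have hG : G.IsSymm := Matrix.ext fun α β => hb.eq (x β) (x α)
  obtain ⟨Q, μ, hQ, hQ', hGQ⟩ := Matrix.exists_orthogonal_diagonalization hG
  have hQGQ : Qᵀ * G * Q = diagonal μ := by
    rw [hGQ]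
    simp only [← Matrix.mul_assoc, hQ, Matrix.one_mul]
    simp only [Matrix.mul_assoc, hQ, Matrix.mul_one]
  refine ⟨Q, hQ', fun γ δ hγδ => ?_⟩
  have h : b (rotateFamily Q x γ) (rotateFamily Q x δ) = (Qᵀ * G * Q) γ δ := by
    simp only [rotateFamily, map_sum, map_smul, LinearMap.sum_apply, LinearMap.smul_apply,
      smul_eq_mul, mul_apply, transpose_apply, G, of_apply, Finset.sum_mul, Finset.mul_sum]
    exact Finset.sum_congr rfl fun β _ => Finset.sum_congr rfl fun α _ => by ring
  rw [h, hQGQ, diagonal_apply_ne _ hγδ]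

theorem li_li_frobenius {ι m : Type*} [Fintype ι] [DecidableEq ι] [Fintype m] [DecidableEq m]
    {A : ι → Matrix m m ℝ} (hA : ∀ α, (A α).IsSymm) :
    ∑ α, ∑ β, frobeniusInner (A α * A β - A β * A α) (A α * A β - A β * A α)
        + ∑ α, ∑ β, frobeniusInner (A α) (A β) ^ 2
      ≤ 3 / 2 * (∑ α, frobeniusInner (A α) (A α)) ^ 2 := by
  obtain ⟨V, hV, horth⟩ := exists_rotateFamily_orthogonal frobeniusInner frobeniusInner_isSymm A
  have hsymm : ∀ γ, (rotateFamily V A γ).IsSymm := fun γ => by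
    simp only [IsSymm, rotateFamily, transpose_sum, transpose_smul, (hA _).eq]
  have hcomm := sum_sum_bilin_rotateFamily
    (LinearMap.mul ℝ (Matrix m m ℝ) - (LinearMap.mul ℝ (Matrix m m ℝ)).flip) frobeniusInner hV A
  have hgram := sum_sum_bilin_rotateFamily frobeniusInner (LinearMap.mul ℝ ℝ) hV A
  simp only [LinearMap.sub_apply, LinearMap.mul_apply', LinearMap.flip_apply] at hcomm
  simp only [LinearMap.mul_apply', ← sq] at hgram
  rw [← hcomm, ← hgram, ← sum_bilin_rotateFamily frobeniusInner hV A]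
  exact li_li_of_orthogonal hsymm horth

theorem li_li_inequality_general (p n : ℕ)
    (A : Fin p → Matrix (Fin n) (Fin n) ℝ)
    (hA : ∀ α, (A α).IsSymm) :
    (∑ α : Fin p, ∑ β : Fin p, ∑ i : Fin n, ∑ j : Fin n,
        ((A α * A β - A β * A α) i j) ^ 2)
      + ∑ α : Fin p, ∑ β : Fin p, (Matrix.trace (A α * A β)) ^ 2
      ≤ (3 / 2) * (∑ α : Fin p, Matrix.trace (A α * A α)) ^ 2 := by
  simp only [← frobeniusInner_self, trace_mul_eq_frobeniusInner (hA _)]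
  exact li_li_frobenius hA

/-- Li–Li algebraic inequality: for symmetric real `n × n` matrices `A 1, …, A p`
(`p ≥ 2`, `n ≥ 1`), with `S α β = tr (A α * A β)` and `S = ∑ α, tr (A α * A α)`,
one has `∑ α β, ‖[A α, A β]‖² + ∑ α β, (S α β)² ≤ (3/2) * S²`. -/
theorem li_li_inequality (p n : ℕ) (hp : 2 ≤ p) (hn : 1 ≤ n)
    (A : Fin p → Matrix (Fin n) (Fin n) ℝ)
    (hA : ∀ α, (A α).IsSymm) :
    (∑ α : Fin p, ∑ β : Fin p, ∑ i : Fin n, ∑ j : Fin n,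
        ((A α * A β - A β * A α) i j) ^ 2)
      + ∑ α : Fin p, ∑ β : Fin p, (Matrix.trace (A α * A β)) ^ 2
      ≤ (3 / 2) * (∑ α : Fin p, Matrix.trace (A α * A α)) ^ 2 :=
  li_li_inequality_general p n A hA
end

section
/- Let n ≥ 1 and let a_1, …, a_n and b_{ij} (i, j = 1, …, n) be real numbers satisfying Σ_{i=1}^n a_i = 0, Σ_{i=1}^n b_{ii} = 0, b_{ij} = b_{ji} for all i, j, and Σ_{i,j=1}^n b_{ij}² = b. Then −(Σ_{i=1}^n b_{ii} a_i)² + Σ_{i,j=1}^n b_{ij}² a_i a_j − Σ_{i,j=1}^n b_{ij}² a_i² ≥ −b · Σ_{i=1}^n a_i². -/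
open BigOperators

/-- Cheng's algebraic lemma: if `∑ a i = 0`, `∑ b i i = 0`, `b` is symmetric and
`∑ i j, (b i j)² = bval`, then
`-(∑ i, b i i * a i)² + ∑ i j, (b i j)² * a i * a j - ∑ i j, (b i j)² * (a i)²
  ≥ -bval * ∑ i, (a i)²`. -/
theorem cheng_lemma (n : ℕ) (hn : 1 ≤ n) (a : Fin n → ℝ) (b : Fin n → Fin n → ℝ)
    (bval : ℝ)
    (ha : ∑ i, a i = 0)
    (hbtr : ∑ i, b i i = 0)
    (hbsymm : ∀ i j, b i j = b j i)
    (hbnorm : ∑ i, ∑ j, (b i j) ^ 2 = bval) :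
    -(∑ i, b i i * a i) ^ 2 + (∑ i, ∑ j, (b i j) ^ 2 * a i * a j)
        - ∑ i, ∑ j, (b i j) ^ 2 * (a i) ^ 2
      ≥ -bval * ∑ i, (a i) ^ 2 := by
  set S := ∑ i, (a i) ^ 2 with hS
  have hS0 : 0 ≤ S := Finset.sum_nonneg fun i _ => sq_nonneg _
  -- swap identity
  have hswap : ∑ i, ∑ j, (b i j) ^ 2 * (a j) ^ 2 = ∑ i, ∑ j, (b i j) ^ 2 * (a i) ^ 2 := by
    rw [Finset.sum_comm]
    exact Finset.sum_congr rfl fun i _ => Finset.sum_congr rfl fun j _ => by rw [hbsymm]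
  -- key identity
  have key : (∑ i, ∑ j, (b i j) ^ 2 * a i * a j) - ∑ i, ∑ j, (b i j) ^ 2 * (a i) ^ 2
      = -(1/2) * ∑ i, ∑ j, (b i j) ^ 2 * (a i - a j) ^ 2 := by
    have expand : ∀ i j : Fin n, (b i j) ^ 2 * (a i - a j) ^ 2
        = (b i j) ^ 2 * (a i) ^ 2 - 2 * ((b i j) ^ 2 * a i * a j) + (b i j) ^ 2 * (a j) ^ 2 :=
      fun i j => by ring
    simp_rw [expand, Finset.sum_add_distrib, Finset.sum_sub_distrib, ← Finset.mul_sum]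
    linarith [hswap]
  -- Cauchy-Schwarz on the diagonal
  have hCS : (∑ i, b i i * a i) ^ 2 ≤ (∑ i, (b i i) ^ 2) * S :=
    Finset.sum_mul_sq_le_sq_mul_sq Finset.univ (fun i => b i i) a
  -- off-diagonal bound
  have hQ : ∑ i, ∑ j, (b i j) ^ 2 * (a i - a j) ^ 2
      ≤ 2 * S * (bval - ∑ i, (b i i) ^ 2) := by
    have h1 : ∀ i : Fin n, ∑ j, (b i j) ^ 2 * (a i - a j) ^ 2
        ≤ 2 * S * ((∑ j, (b i j) ^ 2) - (b i i) ^ 2) := by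
      intro i
      have hz : (b i i) ^ 2 * (a i - a i) ^ 2 = 0 := by ring
      have hrw : ∑ j, (b i j) ^ 2 * (a i - a j) ^ 2
          = ∑ j ∈ Finset.univ.erase i, (b i j) ^ 2 * (a i - a j) ^ 2 := by
        rw [← Finset.add_sum_erase Finset.univ (fun j => (b i j) ^ 2 * (a i - a j) ^ 2)
          (Finset.mem_univ i)]
        simp [hz]
      rw [hrw]
      have hb : ∀ j ∈ Finset.univ.erase i, (b i j) ^ 2 * (a i - a j) ^ 2 ≤ (b i j) ^ 2 * (2 * S) := by
        intro j hj
        have hji : j ≠ i := (Finset.mem_erase.mp hj).1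
        have h2 : (a j) ^ 2 ≤ ∑ k ∈ Finset.univ.erase i, (a k) ^ 2 :=
          Finset.single_le_sum (fun k _ => sq_nonneg (a k)) (Finset.mem_erase.mpr ⟨hji, Finset.mem_univ j⟩)
        have h3 : (a i) ^ 2 + ∑ k ∈ Finset.univ.erase i, (a k) ^ 2 = S :=
          Finset.add_sum_erase Finset.univ (fun k => (a k) ^ 2) (Finset.mem_univ i)
        have h4 : (a i - a j) ^ 2 ≤ 2 * S := by nlinarith [sq_nonneg (a i + a j)]
        exact mul_le_mul_of_nonneg_left h4 (sq_nonneg _)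
      calc ∑ j ∈ Finset.univ.erase i, (b i j) ^ 2 * (a i - a j) ^ 2
          ≤ ∑ j ∈ Finset.univ.erase i, (b i j) ^ 2 * (2 * S) := Finset.sum_le_sum hb
        _ = ((∑ j, (b i j) ^ 2) - (b i i) ^ 2) * (2 * S) := by
            rw [← Finset.sum_mul, Finset.sum_erase_eq_sub (Finset.mem_univ i)]
        _ = 2 * S * ((∑ j, (b i j) ^ 2) - (b i i) ^ 2) := by ring
    calc ∑ i, ∑ j, (b i j) ^ 2 * (a i - a j) ^ 2
        ≤ ∑ i, 2 * S * ((∑ j, (b i j) ^ 2) - (b i i) ^ 2) := Finset.sum_le_sum fun i _ => h1 i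
      _ = 2 * S * (bval - ∑ i, (b i i) ^ 2) := by
          rw [← Finset.mul_sum, Finset.sum_sub_distrib, hbnorm]
  linarith [key, hCS, hQ]
end

section
/- Let D and A be symmetric real n×n matrices with tr(D) = 0 and tr(A) = 0. Then tr((DA)²) − (tr(DA))² − tr(D²A²) ≥ − tr(D²)·tr(A²). -/
open Matrix Finset

/-- Key scalar inequality, after diagonalizing `D`. -/
lemma key_sum_estimate (n : ℕ) (l : Fin n → ℝ) (b : Matrix (Fin n) (Fin n) ℝ)
    (hb : ∀ i j, b i j = b j i) :
    (∑ i, ∑ j, l i * l j * (b i j) ^ 2) - (∑ i, l i * b i i) ^ 2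
        - (∑ i, ∑ j, (l i) ^ 2 * (b i j) ^ 2)
      ≥ -((∑ i, (l i) ^ 2) * (∑ i, ∑ j, (b i j) ^ 2)) := by
  set S : ℝ := ∑ i, (l i) ^ 2 with hS
  have hSnonneg : 0 ≤ S := Finset.sum_nonneg fun i _ => sq_nonneg _
  -- the coefficient is nonnegative
  have hcoef : ∀ i j : Fin n, (l i - l j) ^ 2 / 2 ≤ S := by
    intro i j
    by_cases hij : i = j
    · subst hij; simpa using hSnonneg
    · have h1 : l i ^ 2 + l j ^ 2 ≤ S := by
        have h2 : (∑ k ∈ ({i, j} : Finset (Fin n)), (l k) ^ 2) ≤ S :=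
          Finset.sum_le_sum_of_subset_of_nonneg (Finset.subset_univ _)
            (fun k _ _ => sq_nonneg _)
        rwa [Finset.sum_pair hij] at h2
      nlinarith [sq_nonneg (l i + l j)]
  -- swap lemma using symmetry of b
  have hswap : (∑ i, ∑ j, (l j) ^ 2 * (b i j) ^ 2)
      = ∑ i, ∑ j, (l i) ^ 2 * (b i j) ^ 2 := by
    rw [Finset.sum_comm]
    refine Finset.sum_congr rfl fun i _ => Finset.sum_congr rfl fun j _ => ?_
    rw [hb j i]
  -- the identity
  have hSC : (∑ i, ∑ j, S * (b i j) ^ 2) = S * (∑ i, ∑ j, (b i j) ^ 2) := by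
    simp_rw [← Finset.mul_sum]
  have hid : (∑ i, ∑ j, (S - (l i - l j) ^ 2 / 2) * (b i j) ^ 2)
      = (∑ i, ∑ j, l i * l j * (b i j) ^ 2)
        - (∑ i, ∑ j, (l i) ^ 2 * (b i j) ^ 2) + (∑ i, ∑ j, S * (b i j) ^ 2) := by
    have hterm : ∀ i j : Fin n, (S - (l i - l j) ^ 2 / 2) * (b i j) ^ 2
        = l i * l j * (b i j) ^ 2 - (l i) ^ 2 * (b i j) ^ 2 / 2
          - (l j) ^ 2 * (b i j) ^ 2 / 2 + S * (b i j) ^ 2 := fun i j => by ring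
    simp_rw [hterm, Finset.sum_add_distrib, Finset.sum_sub_distrib, ← Finset.sum_div]
    rw [hswap]
    ring
  -- the main lower bound: keep only diagonal terms
  have hmain : (∑ i, S * (b i i) ^ 2)
      ≤ ∑ i, ∑ j, (S - (l i - l j) ^ 2 / 2) * (b i j) ^ 2 := by
    refine Finset.sum_le_sum fun i _ => ?_
    have h0 : S * (b i i) ^ 2 = (S - (l i - l i) ^ 2 / 2) * (b i i) ^ 2 := by ring
    rw [h0]
    exact Finset.single_le_sum
      (fun j _ => mul_nonneg (sub_nonneg.mpr (hcoef i j)) (sq_nonneg _))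
      (Finset.mem_univ i)
  -- Cauchy–Schwarz on the diagonal
  have hcs : (∑ i, l i * b i i) ^ 2 ≤ ∑ i, S * (b i i) ^ 2 := by
    rw [← Finset.mul_sum]
    exact Finset.sum_mul_sq_le_sq_mul_sq Finset.univ l fun i => b i i
  linarith [hmain, hcs, hid.le, hid.ge, hSC.le, hSC.ge]

/-- For symmetric tracefree real `n × n` matrices `D`, `A`:
`tr((DA)²) - (tr(DA))² - tr(D²A²) ≥ - tr(D²) * tr(A²)`. -/
theorem tracefree_mixed_term_estimate (n : ℕ) (D A : Matrix (Fin n) (Fin n) ℝ)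
    (hD : D.IsSymm) (hA : A.IsSymm)
    (hDtr : Matrix.trace D = 0) (hAtr : Matrix.trace A = 0) :
    Matrix.trace ((D * A) * (D * A)) - (Matrix.trace (D * A)) ^ 2
        - Matrix.trace (D * D * (A * A))
      ≥ - (Matrix.trace (D * D) * Matrix.trace (A * A)) := by
  have hH : D.IsHermitian := by
    rw [Matrix.IsHermitian, Matrix.conjTranspose_eq_transpose_of_trivial]
    exact hD
  set V : Matrix (Fin n) (Fin n) ℝ := (hH.eigenvectorUnitary : Matrix (Fin n) (Fin n) ℝ)
    with hVdef
  set l : Fin n → ℝ := hH.eigenvalues with hldef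
  have hVV : V * star V = 1 := (Matrix.mem_unitaryGroup_iff).mp hH.eigenvectorUnitary.2
  have hVV' : star V * V = 1 := (Matrix.mem_unitaryGroup_iff').mp hH.eigenvectorUnitary.2
  have hDspec : D = V * Matrix.diagonal l * star V := by
    have := hH.spectral_theorem
    simpa [RCLike.ofReal_real_eq_id] using this
  set B : Matrix (Fin n) (Fin n) ℝ := star V * A * V with hBdef
  have hAspec : A = V * B * star V := by
    rw [hBdef]
    simp only [mul_assoc]
    rw [hVV, mul_one, ← mul_assoc, hVV, one_mul]
  have conj : ∀ M N : Matrix (Fin n) (Fin n) ℝ,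
      (V * M * star V) * (V * N * star V) = V * (M * N) * star V := by
    intro M N
    simp only [mul_assoc]
    rw [← mul_assoc (star V) V, hVV', one_mul]
  have tconj : ∀ M : Matrix (Fin n) (Fin n) ℝ,
      Matrix.trace (V * M * star V) = Matrix.trace M := by
    intro M
    rw [Matrix.trace_mul_comm, ← mul_assoc, hVV', one_mul]
  set Λ : Matrix (Fin n) (Fin n) ℝ := Matrix.diagonal l with hΛdef
  -- B is symmetric
  have hBsym : ∀ i j, B i j = B j i := by
    have hBH : B.IsHermitian := by
      rw [hBdef]
      have : (star V * A * V)ᴴ = star V * A * V := by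
        rw [Matrix.conjTranspose_mul, Matrix.conjTranspose_mul]
        have hAH : Aᴴ = A := by
          rw [Matrix.conjTranspose_eq_transpose_of_trivial]; exact hA
        rw [hAH]
        simp [Matrix.star_eq_conjTranspose, mul_assoc]
      exact this
    intro i j
    simpa using hBH.apply j i
  -- rewrite all traces in terms of Λ and B
  have h1 : Matrix.trace ((D * A) * (D * A)) = Matrix.trace ((Λ * B) * (Λ * B)) := by
    rw [hDspec, hAspec, conj, conj, tconj]
  have h2 : Matrix.trace (D * A) = Matrix.trace (Λ * B) := by
    rw [hDspec, hAspec, conj, tconj]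
  have h3 : Matrix.trace (D * D * (A * A)) = Matrix.trace (Λ * Λ * (B * B)) := by
    rw [hDspec, hAspec, conj, conj, conj, tconj]
  have h4 : Matrix.trace (D * D) = Matrix.trace (Λ * Λ) := by
    rw [hDspec, conj, tconj]
  have h5 : Matrix.trace (A * A) = Matrix.trace (B * B) := by
    rw [hAspec, conj, tconj]
  rw [h1, h2, h3, h4, h5]
  -- helper: trace of a product as a double sum
  have trace_mul_eq : ∀ X Y : Matrix (Fin n) (Fin n) ℝ,
      Matrix.trace (X * Y) = ∑ i, ∑ j, X i j * Y j i := by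
    intro X Y
    simp [Matrix.trace, Matrix.diag, Matrix.mul_apply]
  -- expand the traces into sums
  have e1 : Matrix.trace ((Λ * B) * (Λ * B)) = ∑ i, ∑ j, l i * l j * (B i j) ^ 2 := by
    rw [trace_mul_eq]
    refine Finset.sum_congr rfl fun i _ => Finset.sum_congr rfl fun j _ => ?_
    rw [hΛdef, Matrix.diagonal_mul, Matrix.diagonal_mul, hBsym j i]
    ring
  have e2 : Matrix.trace (Λ * B) = ∑ i, l i * B i i := by
    have : Matrix.trace (Λ * B) = ∑ i, (Λ * B) i i := rfl
    rw [this]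
    refine Finset.sum_congr rfl fun i _ => ?_
    rw [hΛdef, Matrix.diagonal_mul]
  have e3 : Matrix.trace (Λ * Λ * (B * B)) = ∑ i, ∑ j, (l i) ^ 2 * (B i j) ^ 2 := by
    rw [trace_mul_eq]
    refine Finset.sum_congr rfl fun i _ => ?_
    have hd : ∀ j, (Λ * Λ) i j = (if i = j then l i * l i else 0) := by
      intro j
      rw [hΛdef, Matrix.diagonal_mul, Matrix.diagonal_apply]
      by_cases h : i = j <;> simp [h]
    simp_rw [hd, ite_mul, zero_mul, Finset.sum_ite_eq, Finset.mem_univ, if_true]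
    rw [Matrix.mul_apply, Finset.mul_sum]
    refine Finset.sum_congr rfl fun j _ => ?_
    rw [hBsym j i]
    ring
  have e4 : Matrix.trace (Λ * Λ) = ∑ i, (l i) ^ 2 := by
    rw [hΛdef, Matrix.diagonal_mul_diagonal, Matrix.trace_diagonal]
    exact Finset.sum_congr rfl fun i _ => by ring
  have e5 : Matrix.trace (B * B) = ∑ i, ∑ j, (B i j) ^ 2 := by
    rw [trace_mul_eq]
    refine Finset.sum_congr rfl fun i _ => Finset.sum_congr rfl fun j _ => ?_
    rw [hBsym j i]
    ring
  rw [e1, e2, e3, e4, e5]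
  exact key_sum_estimate n l B hBsym
end

section
/- Let C and A be symmetric real n×n matrices, and let C̊ = C − (tr(C)/n)·I be the tracefree part of C. Then ‖CA − AC‖² ≤ 2·‖C̊‖²·‖A‖², where ‖M‖² = Σ_{i,j} M_{ij}² is the squared Frobenius norm; equivalently, tr((CA)²) − tr(C²A²) ≥ −‖C̊‖²·‖A‖². -/
open Matrix BigOperators


variable {n : ℕ}

lemma frob_eq_trace (M : Matrix (Fin n) (Fin n) ℝ) :
    (∑ i : Fin n, ∑ j : Fin n, (M i j) ^ 2) = Matrix.trace (M * Mᵀ) := by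
  simp [Matrix.trace, Matrix.mul_apply, Matrix.diag, sq]

lemma frob_conj (U X : Matrix (Fin n) (Fin n) ℝ) (h1 : U * Uᵀ = 1) (h2 : Uᵀ * U = 1) :
    (∑ i : Fin n, ∑ j : Fin n, ((U * X * Uᵀ) i j) ^ 2)
      = ∑ i : Fin n, ∑ j : Fin n, (X i j) ^ 2 := by
  clear h1
  rw [frob_eq_trace, frob_eq_trace]
  rw [Matrix.transpose_mul, Matrix.transpose_mul, Matrix.transpose_transpose]
  calc Matrix.trace (U * X * Uᵀ * (Uᵀᵀ * (Xᵀ * Uᵀ))) = Matrix.trace (U * (X * Xᵀ) * Uᵀ) := by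
        rw [Matrix.transpose_transpose]
        rw [show U * X * Uᵀ * (U * (Xᵀ * Uᵀ)) = U * (X * ((Uᵀ * U) * (Xᵀ * Uᵀ))) by
          simp only [Matrix.mul_assoc]]
        rw [h2, one_mul, Matrix.mul_assoc, Matrix.mul_assoc]
    _ = Matrix.trace (X * Xᵀ) := by
        rw [Matrix.trace_mul_comm, ← Matrix.mul_assoc, h2, one_mul]

lemma diag_comm_bound (d : Fin n → ℝ) (B : Matrix (Fin n) (Fin n) ℝ) :
    (∑ i : Fin n, ∑ j : Fin n, ((Matrix.diagonal d * B - B * Matrix.diagonal d) i j) ^ 2)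
      ≤ 2 * (∑ k : Fin n, (d k) ^ 2) * (∑ i : Fin n, ∑ j : Fin n, (B i j) ^ 2) := by
  have hentry : ∀ i j, (Matrix.diagonal d * B - B * Matrix.diagonal d) i j
      = (d i - d j) * B i j := by
    intro i j
    simp [Matrix.sub_apply, Matrix.diagonal_mul, Matrix.mul_diagonal, sub_mul, mul_comm]
    ring
  have key : ∀ i j : Fin n, ((d i - d j) * B i j) ^ 2
      ≤ 2 * (∑ k : Fin n, (d k) ^ 2) * (B i j) ^ 2 := by
    intro i j
    rcases eq_or_ne i j with rfl | hij
    · simp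
      positivity
    · have h1 : (d i - d j) ^ 2 ≤ 2 * (d i ^ 2 + d j ^ 2) := by nlinarith [sq_nonneg (d i + d j)]
      have h2 : d i ^ 2 + d j ^ 2 ≤ ∑ k : Fin n, (d k) ^ 2 := by
        have := Finset.sum_pair hij (f := fun k => d k ^ 2)
        rw [← this]
        exact Finset.sum_le_sum_of_subset_of_nonneg (Finset.subset_univ _)
          (fun k _ _ => sq_nonneg _)
      calc ((d i - d j) * B i j) ^ 2 = (d i - d j) ^ 2 * (B i j) ^ 2 := by ring
        _ ≤ 2 * (∑ k : Fin n, (d k) ^ 2) * (B i j) ^ 2 := by nlinarith [sq_nonneg (B i j)]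
  calc (∑ i : Fin n, ∑ j : Fin n, ((Matrix.diagonal d * B - B * Matrix.diagonal d) i j) ^ 2)
      = ∑ i : Fin n, ∑ j : Fin n, ((d i - d j) * B i j) ^ 2 := by
        simp_rw [hentry]
    _ ≤ ∑ i : Fin n, ∑ j : Fin n, 2 * (∑ k : Fin n, (d k) ^ 2) * (B i j) ^ 2 :=
        Finset.sum_le_sum fun i _ => Finset.sum_le_sum fun j _ => key i j
    _ = 2 * (∑ k : Fin n, (d k) ^ 2) * (∑ i : Fin n, ∑ j : Fin n, (B i j) ^ 2) := by
        simp_rw [← Finset.mul_sum]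

lemma frob_diagonal (d : Fin n → ℝ) :
    (∑ i : Fin n, ∑ j : Fin n, ((Matrix.diagonal d) i j) ^ 2) = ∑ k : Fin n, (d k) ^ 2 := by
  simp [Matrix.diagonal_apply, apply_ite, Finset.sum_ite_eq']


/-- Commutator estimate in terms of the tracefree part: for symmetric real
`n × n` matrices `C`, `A`, with `C̊ = C - (tr C / n) • I`,
`‖CA - AC‖² ≤ 2 ‖C̊‖² ‖A‖²`; equivalently
`tr((CA)²) - tr(C²A²) ≥ -‖C̊‖² ‖A‖²`
(squared Frobenius norms written as sums of squares of entries). -/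
theorem commutator_tracefree_estimate (n : ℕ) (C A : Matrix (Fin n) (Fin n) ℝ)
    (hC : C.IsSymm) (hA : A.IsSymm) :
    (∑ i : Fin n, ∑ j : Fin n, ((C * A - A * C) i j) ^ 2)
        ≤ 2 * (∑ i : Fin n, ∑ j : Fin n,
              ((C - (Matrix.trace C / (n : ℝ)) • (1 : Matrix (Fin n) (Fin n) ℝ)) i j) ^ 2)
            * (∑ i : Fin n, ∑ j : Fin n, (A i j) ^ 2) ∧
      Matrix.trace ((C * A) * (C * A)) - Matrix.trace (C * C * (A * A))
        ≥ - ((∑ i : Fin n, ∑ j : Fin n,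
              ((C - (Matrix.trace C / (n : ℝ)) • (1 : Matrix (Fin n) (Fin n) ℝ)) i j) ^ 2)
            * (∑ i : Fin n, ∑ j : Fin n, (A i j) ^ 2)) := by
  set c : ℝ := Matrix.trace C / n with hc
  set D : Matrix (Fin n) (Fin n) ℝ := C - c • 1 with hDdef
  have hDsymm : Dᵀ = D := by
    rw [hDdef, Matrix.transpose_sub, hC.eq, Matrix.transpose_smul, Matrix.transpose_one]
  have hDherm : D.IsHermitian := by
    rw [Matrix.IsHermitian, Matrix.conjTranspose_eq_transpose_of_trivial]
    exact hDsymm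
  set U : Matrix (Fin n) (Fin n) ℝ := (hDherm.eigenvectorUnitary : Matrix (Fin n) (Fin n) ℝ)
    with hUdef
  set d : Fin n → ℝ := RCLike.ofReal ∘ hDherm.eigenvalues with hddef
  have hstar : star U = Uᵀ := by
    rw [Matrix.star_eq_conjTranspose, Matrix.conjTranspose_eq_transpose_of_trivial]
  have hspec : D = U * Matrix.diagonal d * Uᵀ := by
    rw [← hstar]; exact hDherm.spectral_theorem
  have h1 : U * Uᵀ = 1 := by
    rw [← hstar]; exact Matrix.mem_unitaryGroup_iff.mp hDherm.eigenvectorUnitary.2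
  have h2 : Uᵀ * U = 1 := by
    rw [← hstar]; exact Matrix.mem_unitaryGroup_iff'.mp hDherm.eigenvectorUnitary.2
  set A' : Matrix (Fin n) (Fin n) ℝ := Uᵀ * A * U with hA'def
  -- commutator identity
  have e1 : C * A - A * C = D * A - A * D := by
    rw [hDdef, Matrix.sub_mul, Matrix.mul_sub, Matrix.smul_mul, Matrix.mul_smul,
      Matrix.one_mul, Matrix.mul_one]
    abel
  have key1 : U * (Matrix.diagonal d * A') * Uᵀ = D * A := by
    rw [hA'def, hspec]
    rw [show U * (Matrix.diagonal d * (Uᵀ * A * U)) * Uᵀ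
        = U * Matrix.diagonal d * Uᵀ * A * (U * Uᵀ) by simp only [Matrix.mul_assoc],
      h1, Matrix.mul_one]
  have key2 : U * (A' * Matrix.diagonal d) * Uᵀ = A * D := by
    rw [hA'def, hspec]
    rw [show U * ((Uᵀ * A * U) * Matrix.diagonal d) * Uᵀ
        = (U * Uᵀ) * (A * (U * Matrix.diagonal d * Uᵀ)) by simp only [Matrix.mul_assoc],
      h1, Matrix.one_mul, Matrix.mul_assoc]
  have hX : U * (Matrix.diagonal d * A' - A' * Matrix.diagonal d) * Uᵀ = C * A - A * C := by
    rw [Matrix.mul_sub, Matrix.sub_mul, key1, key2, ← e1]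
  -- Frobenius computations
  have hKfrob : (∑ i : Fin n, ∑ j : Fin n, ((C * A - A * C) i j) ^ 2)
      = ∑ i : Fin n, ∑ j : Fin n,
          ((Matrix.diagonal d * A' - A' * Matrix.diagonal d) i j) ^ 2 := by
    rw [← hX, frob_conj U _ h1 h2]
  have hDfrob : (∑ i : Fin n, ∑ j : Fin n, (D i j) ^ 2) = ∑ k : Fin n, (d k) ^ 2 := by
    rw [show (∑ i : Fin n, ∑ j : Fin n, (D i j) ^ 2)
        = ∑ i : Fin n, ∑ j : Fin n, ((U * Matrix.diagonal d * Uᵀ) i j) ^ 2 by rw [← hspec]]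
    rw [frob_conj U _ h1 h2, frob_diagonal]
  have hAfrob : (∑ i : Fin n, ∑ j : Fin n, (A' i j) ^ 2)
      = ∑ i : Fin n, ∑ j : Fin n, (A i j) ^ 2 := by
    have := frob_conj Uᵀ A (by rw [Matrix.transpose_transpose]; exact h2)
      (by rw [Matrix.transpose_transpose]; exact h1)
    rw [Matrix.transpose_transpose] at this
    rw [hA'def]; exact this
  -- Part 1
  have part1 : (∑ i : Fin n, ∑ j : Fin n, ((C * A - A * C) i j) ^ 2)
      ≤ 2 * (∑ i : Fin n, ∑ j : Fin n, (D i j) ^ 2)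
        * (∑ i : Fin n, ∑ j : Fin n, (A i j) ^ 2) := by
    rw [hKfrob, hDfrob, ← hAfrob]
    exact diag_comm_bound d A'
  refine ⟨part1, ?_⟩
  -- Part 2: trace identity
  have hKT : (C * A - A * C)ᵀ = A * C - C * A := by
    rw [Matrix.transpose_sub, Matrix.transpose_mul, Matrix.transpose_mul, hA.eq, hC.eq]
  have t1 : Matrix.trace (C * A * (A * C)) = Matrix.trace (C * C * (A * A)) := by
    rw [show C * A * (A * C) = C * (A * A * C) by simp only [Matrix.mul_assoc],
      Matrix.trace_mul_comm,
      show A * A * C * C = A * A * (C * C) by simp only [Matrix.mul_assoc],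
      Matrix.trace_mul_comm]
  have t2 : Matrix.trace (A * C * (C * A)) = Matrix.trace (C * C * (A * A)) := by
    rw [show A * C * (C * A) = A * (C * C * A) by simp only [Matrix.mul_assoc],
      Matrix.trace_mul_comm,
      show C * C * A * A = C * C * (A * A) by simp only [Matrix.mul_assoc]]
  have t3 : Matrix.trace (A * C * (A * C)) = Matrix.trace (C * A * (C * A)) := by
    rw [show A * C * (A * C) = A * (C * A * C) by simp only [Matrix.mul_assoc],
      Matrix.trace_mul_comm,
      show C * A * C * A = C * A * (C * A) by simp only [Matrix.mul_assoc]]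
  have htr : (∑ i : Fin n, ∑ j : Fin n, ((C * A - A * C) i j) ^ 2)
      = 2 * Matrix.trace (C * C * (A * A)) - 2 * Matrix.trace (C * A * (C * A)) := by
    rw [frob_eq_trace, hKT, Matrix.sub_mul, Matrix.mul_sub, Matrix.mul_sub,
      Matrix.trace_sub, Matrix.trace_sub, Matrix.trace_sub, t1, t2, t3]
    ring
  have hge : Matrix.trace (C * A * (C * A)) - Matrix.trace (C * C * (A * A))
      ≥ - ((∑ i : Fin n, ∑ j : Fin n, (D i j) ^ 2)
          * (∑ i : Fin n, ∑ j : Fin n, (A i j) ^ 2)) := by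
    have h := part1
    rw [htr] at h
    linarith
  exact hge
end
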